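/- arXiv:2512.10906 — 4 statements merged into one kernel-verified Lean document; each statement's English description precedes it below -/
import Mathlib

section
/- Let r ≥ 0, y₀ ∈ ℝⁿ, C ∈ ℝ^{m×n}, and D ∈ S^m_{++}. Then min_{x∈ℝ^m} max_{y∈ℝⁿ : ‖y−y₀‖₂² ≤ r} (x+Cy)ᵀD(x+Cy) = r‖CᵀDC‖_∞, and this value is attained by x* = −Cy₀ and y* = y₀ ± √r ξ, where ξ is a unit eigenvector of CᵀDC corresponding to its largest eigenvalue. -/
open Matrix
open scoped ENNReal

noncomputable def singVals {n : ℕ} (A : Matrix (Fin n) (Fin n) ℝ) : Fin n → ℝ :=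
  fun i => Real.sqrt ((Matrix.isHermitian_conjTranspose_mul_self A).eigenvalues i)

/-- The Schatten `p`-norm of a square real matrix, defined via its singular values. -/
noncomputable def schattenNorm {n : ℕ} (p : ℝ≥0∞) (A : Matrix (Fin n) (Fin n) ℝ) : ℝ :=
  if p = ⊤ then ⨆ i, singVals A i
  else (∑ i, singVals A i ^ p.toReal) ^ (1 / p.toReal)

/-!
With `M = CᵀDC` and `μ = ‖M‖_∞`, the objective at `x` and `y = y₀ + z` is the `D`-form of
`u + Cz` with `u = x + Cy₀`. For `x⋆ = -Cy₀` it is `zᵀMz ≤ μ‖z‖² ≤ μr` (Cauchy–Schwarz and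
`‖Mz‖ ≤ μ‖z‖`), with equality at `z = ±√r ξ`. For arbitrary `x`, the parallelogram law for the
`D`-form shows that one of the two points `z = ±√r ξ` gives a value at least
`(√r Cξ)ᵀD(√r Cξ) = μr`.
-/

section QuadraticForm

variable {ι κ R : Type*} [Fintype ι] [Fintype κ] [CommRing R]

lemma dotProduct_transpose_mul_mul_mulVec (C : Matrix κ ι R) (D : Matrix κ κ R) (z : ι → R) :
    z ⬝ᵥ ((Cᵀ * D * C) *ᵥ z) = (C *ᵥ z) ⬝ᵥ (D *ᵥ (C *ᵥ z)) := by
  rw [← mulVec_mulVec, ← mulVec_mulVec, dotProduct_mulVec, vecMul_transpose]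

lemma dotProduct_mulVec_add_add_dotProduct_mulVec_sub (D : Matrix ι ι R) (u v : ι → R) :
    (u + v) ⬝ᵥ (D *ᵥ (u + v)) + (u - v) ⬝ᵥ (D *ᵥ (u - v)) =
      2 * (u ⬝ᵥ (D *ᵥ u) + v ⬝ᵥ (D *ᵥ v)) := by
  simp only [mulVec_add, mulVec_sub, dotProduct_add, dotProduct_sub, add_dotProduct,
    sub_dotProduct]
  ring

lemma Matrix.PosSemidef.dotProduct_mulVec_le_max {D : Matrix ι ι ℝ} (hD : D.PosSemidef)
    (u v : ι → ℝ) :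
    v ⬝ᵥ (D *ᵥ v) ≤ max ((u + v) ⬝ᵥ (D *ᵥ (u + v))) ((u - v) ⬝ᵥ (D *ᵥ (u - v))) := by
  have hu : 0 ≤ u ⬝ᵥ (D *ᵥ u) := by simpa using hD.dotProduct_mulVec_nonneg u
  have := dotProduct_mulVec_add_add_dotProduct_mulVec_sub D u v
  cases le_total ((u + v) ⬝ᵥ (D *ᵥ (u + v))) ((u - v) ⬝ᵥ (D *ᵥ (u - v))) with
  | inl h => rw [max_eq_right h]; linarith
  | inr h => rw [max_eq_left h]; linarith

end QuadraticForm

section Spectral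

variable {ι : Type*} [Fintype ι] [DecidableEq ι]

lemma Matrix.IsHermitian.posSemidef_smul_one_sub {H : Matrix ι ι ℝ} (hH : H.IsHermitian) {b : ℝ}
    (hb : ∀ i, hH.eigenvalues i ≤ b) : (b • 1 - H).PosSemidef := by
  let U : Matrix ι ι ℝ := hH.eigenvectorUnitary
  have hU : U * Uᴴ = 1 := Unitary.mul_star_self_of_mem hH.eigenvectorUnitary.2
  have hH' : U * diagonal hH.eigenvalues * Uᴴ = H := by
    conv_rhs => rw [hH.spectral_theorem, Unitary.conjStarAlgAut_apply]
    simp [U, star_eq_conjTranspose]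
  have hconj : U * (diagonal (fun _ => b) - diagonal hH.eigenvalues) * Uᴴ = b • 1 - H := by
    rw [mul_sub, sub_mul, hH', ← smul_one_eq_diagonal, mul_smul_comm, smul_mul_assoc, mul_one, hU]
  rw [← hconj, diagonal_sub]
  exact (posSemidef_diagonal_iff.2 fun i => sub_nonneg.2 (hb i)).mul_mul_conjTranspose_same U

lemma Matrix.IsHermitian.dotProduct_mulVec_le {H : Matrix ι ι ℝ} (hH : H.IsHermitian) {b : ℝ}
    (hb : ∀ i, hH.eigenvalues i ≤ b) (z : ι → ℝ) : z ⬝ᵥ (H *ᵥ z) ≤ b * (z ⬝ᵥ z) := by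
  have := (hH.posSemidef_smul_one_sub hb).dotProduct_mulVec_nonneg z
  simp only [star_trivial, sub_mulVec, smul_mulVec, one_mulVec, dotProduct_sub,
    dotProduct_smul, smul_eq_mul] at this
  linarith

end Spectral

section SchattenNorm

variable {n : ℕ}

lemma singVals_nonneg (A : Matrix (Fin n) (Fin n) ℝ) (i : Fin n) : 0 ≤ singVals A i :=
  Real.sqrt_nonneg _

lemma schattenNorm_top_eq_iSup (A : Matrix (Fin n) (Fin n) ℝ) :
    schattenNorm ⊤ A = ⨆ i, singVals A i :=
  if_pos rfl

lemma schattenNorm_top_nonneg (A : Matrix (Fin n) (Fin n) ℝ) : 0 ≤ schattenNorm ⊤ A := by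
  rw [schattenNorm_top_eq_iSup]
  exact Real.iSup_nonneg (singVals_nonneg A)

lemma singVals_le_schattenNorm_top (A : Matrix (Fin n) (Fin n) ℝ) (i : Fin n) :
    singVals A i ≤ schattenNorm ⊤ A := by
  rw [schattenNorm_top_eq_iSup]
  exact le_ciSup (Set.finite_range _).bddAbove i

lemma mulVec_dotProduct_mulVec_le_schattenNorm_top_sq (A : Matrix (Fin n) (Fin n) ℝ)
    (z : Fin n → ℝ) : (A *ᵥ z) ⬝ᵥ (A *ᵥ z) ≤ schattenNorm ⊤ A ^ 2 * (z ⬝ᵥ z) := by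
  have hAA := isHermitian_conjTranspose_mul_self A
  have hb (i : Fin n) : hAA.eigenvalues i ≤ schattenNorm ⊤ A ^ 2 := by
    rw [← Real.sq_sqrt (eigenvalues_conjTranspose_mul_self_nonneg A i)]
    exact pow_le_pow_left₀ (singVals_nonneg A i) (singVals_le_schattenNorm_top A i) 2
  have := hAA.dotProduct_mulVec_le hb z
  rwa [conjTranspose_eq_transpose_of_trivial, ← mulVec_mulVec, dotProduct_mulVec,
    vecMul_transpose] at this

lemma dotProduct_mulVec_le_schattenNorm_top (A : Matrix (Fin n) (Fin n) ℝ) (z : Fin n → ℝ) :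
    z ⬝ᵥ (A *ᵥ z) ≤ schattenNorm ⊤ A * (z ⬝ᵥ z) := by
  have hzz : 0 ≤ z ⬝ᵥ z := by simpa using dotProduct_star_self_nonneg z
  have hcs : (z ⬝ᵥ (A *ᵥ z)) ^ 2 ≤ (z ⬝ᵥ z) * ((A *ᵥ z) ⬝ᵥ (A *ᵥ z)) := by
    simpa only [dotProduct, sq] using Finset.sum_mul_sq_le_sq_mul_sq Finset.univ z (A *ᵥ z)
  have hsq : (z ⬝ᵥ (A *ᵥ z)) ^ 2 ≤ (schattenNorm ⊤ A * (z ⬝ᵥ z)) ^ 2 :=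
    calc (z ⬝ᵥ (A *ᵥ z)) ^ 2 ≤ (z ⬝ᵥ z) * (schattenNorm ⊤ A ^ 2 * (z ⬝ᵥ z)) :=
          hcs.trans (mul_le_mul_of_nonneg_left
            (mulVec_dotProduct_mulVec_le_schattenNorm_top_sq A z) hzz)
      _ = (schattenNorm ⊤ A * (z ⬝ᵥ z)) ^ 2 := by ring
  exact le_of_sq_le_sq hsq (mul_nonneg (schattenNorm_top_nonneg A) hzz)

end SchattenNorm

/-- For `r ≥ 0`, `y₀ ∈ ℝⁿ`, `C ∈ ℝ^{m×n}`, `D ≻ 0`: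
`min_x max_{‖y-y₀‖₂² ≤ r} (x+Cy)ᵀD(x+Cy) = r‖CᵀDC‖_∞`, attained at `x⋆ = -Cy₀` and
`y⋆ = y₀ ± √r ξ` with `ξ` a unit leading eigenvector of `CᵀDC`. -/
theorem stmt0 {m n : ℕ} (r : ℝ) (hr : 0 ≤ r) (y₀ : Fin n → ℝ)
    (C : Matrix (Fin m) (Fin n) ℝ) (D : Matrix (Fin m) (Fin m) ℝ) (hD : D.PosDef)
    (ξ : Fin n → ℝ) (hξunit : ∑ i, ξ i ^ 2 = 1)
    (hξeig : (Cᵀ * D * C) *ᵥ ξ = schattenNorm ⊤ (Cᵀ * D * C) • ξ) :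
    -- the value `r‖CᵀDC‖_∞` is a lower bound on the inner maximum for every `x`:
    (∀ x : Fin m → ℝ, ∃ y : Fin n → ℝ, (∑ i, (y i - y₀ i) ^ 2) ≤ r ∧
        r * schattenNorm ⊤ (Cᵀ * D * C) ≤ (x + C *ᵥ y) ⬝ᵥ (D *ᵥ (x + C *ᵥ y))) ∧
    -- `x⋆ = -Cy₀` achieves it: the inner maximum at `x⋆` is at most `r‖CᵀDC‖_∞`:
    (∀ y : Fin n → ℝ, (∑ i, (y i - y₀ i) ^ 2) ≤ r →
        (-(C *ᵥ y₀) + C *ᵥ y) ⬝ᵥ (D *ᵥ (-(C *ᵥ y₀) + C *ᵥ y)) ≤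
          r * schattenNorm ⊤ (Cᵀ * D * C)) ∧
    -- and the inner maximum at `x⋆` is attained by `y⋆ = y₀ ± √r ξ`:
    (∀ s : ℝ, s = 1 ∨ s = -1 →
        (∑ i, ((y₀ i + s * Real.sqrt r * ξ i) - y₀ i) ^ 2) ≤ r ∧
        (-(C *ᵥ y₀) + C *ᵥ (fun i => y₀ i + s * Real.sqrt r * ξ i)) ⬝ᵥ
            (D *ᵥ (-(C *ᵥ y₀) + C *ᵥ (fun i => y₀ i + s * Real.sqrt r * ξ i))) =
          r * schattenNorm ⊤ (Cᵀ * D * C)) := by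
  set μ := schattenNorm ⊤ (Cᵀ * D * C)
  have hsq (s : ℝ) (hs : s = 1 ∨ s = -1) : (s * Real.sqrt r) ^ 2 = r := by
    rcases hs with rfl | rfl <;> simp [Real.sq_sqrt hr]
  have hξξ : ξ ⬝ᵥ ξ = 1 := by simpa only [dotProduct, sq] using hξunit
  have hform (t : ℝ) : (C *ᵥ (t • ξ)) ⬝ᵥ (D *ᵥ (C *ᵥ (t • ξ))) = t ^ 2 * μ := by
    rw [← dotProduct_transpose_mul_mul_mulVec, mulVec_smul, hξeig]
    simp only [dotProduct_smul, smul_dotProduct, smul_eq_mul, hξξ]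
    ring
  have hdist (s : ℝ) (hs : s = 1 ∨ s = -1) :
      (∑ i, ((y₀ i + s * Real.sqrt r * ξ i) - y₀ i) ^ 2) ≤ r := by
    simp only [add_sub_cancel_left, mul_pow, ← Finset.mul_sum, hξunit, mul_one, hsq s hs,
      le_refl]
  have hshift (s : ℝ) (x : Fin m → ℝ) : x + C *ᵥ (fun i => y₀ i + s * Real.sqrt r * ξ i) =
      (x + C *ᵥ y₀) + C *ᵥ ((s * Real.sqrt r) • ξ) := by
    rw [show (fun i => y₀ i + s * Real.sqrt r * ξ i) = y₀ + (s * Real.sqrt r) • ξ from rfl,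
      mulVec_add, add_assoc]
  refine ⟨fun x => ?_, fun y hy => ?_, fun s hs => ⟨hdist s hs, ?_⟩⟩
  · have hmax := hD.posSemidef.dotProduct_mulVec_le_max (x + C *ᵥ y₀) (C *ᵥ (Real.sqrt r • ξ))
    rw [hform, Real.sq_sqrt hr, sub_eq_add_neg, ← mulVec_neg, ← neg_smul] at hmax
    rcases le_max_iff.1 hmax with h | h
    · exact ⟨_, hdist 1 (Or.inl rfl), by rwa [hshift, one_mul]⟩
    · exact ⟨_, hdist (-1) (Or.inr rfl), by rwa [hshift, neg_one_mul]⟩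
  · rw [← sub_eq_neg_add, ← mulVec_sub, ← dotProduct_transpose_mul_mul_mulVec]
    calc _ ≤ μ * ((y - y₀) ⬝ᵥ (y - y₀)) := dotProduct_mulVec_le_schattenNorm_top _ _
      _ ≤ μ * r := by
          refine mul_le_mul_of_nonneg_left ?_ (schattenNorm_top_nonneg _)
          simpa only [dotProduct, Pi.sub_apply, sq] using hy
      _ = r * μ := mul_comm _ _
  · rw [hshift, neg_add_cancel, zero_add, hform, hsq s hs]
end

section
/- Let L ⊆ ℝ^{m×n} be a linear subspace, D ∈ S^m_{++}, K° ∈ ℝ^{m×n}, C(K) := (K−K°)ᵀD(K−K°), and define g(Λ₁,Λ₂) := inf_{K∈L} tr((Λ₁+Λ₂)C(K)) as a function on the real vector space Sⁿ × Sⁿ. Then at any point (Λ̄₁,Λ̄₂) ∈ S₊ⁿ × S₊ⁿ with Λ̄₁ + Λ̄₂ ≻ 0, the function g is Fréchet differentiable, with derivative given by the linear map (A₁,A₂) ↦ tr(C(K*)·(A₁+A₂)), where K* is the unique minimizer of K ↦ tr((Λ̄₁+Λ̄₂)C(K)) over L. -/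
open Matrix
open scoped ENNReal

attribute [local instance] Matrix.frobeniusNormedAddCommGroup Matrix.frobeniusNormedSpace

/-- The continuous linear functional `(A₁, A₂) ↦ tr(M(A₁+A₂))` on pairs of matrices. -/
noncomputable def traceCLM {n : ℕ} (M : Matrix (Fin n) (Fin n) ℝ) :
    (Matrix (Fin n) (Fin n) ℝ × Matrix (Fin n) (Fin n) ℝ) →L[ℝ] ℝ :=
  LinearMap.toContinuousLinearMap
    { toFun := fun A => (M * (A.1 + A.2)).trace
      map_add' := by
        intro A B
        simp [Matrix.mul_add, Matrix.trace_add]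
        ring
      map_smul' := by
        intro c A
        simp [Matrix.mul_smul, Matrix.trace_smul, smul_add, mul_add] }

/-!
For `S = Λ̄₁ + Λ̄₂ ≻ 0` the bilinear form `B_S(X, Y) = tr(S Xᵀ D Y)` is symmetric and coercive,
so `K ↦ B_S(K - K°, K - K°)` attains its minimum on `L` at some `K⋆`; the residual `K⋆ - K°` is
`B_S`-orthogonal to `L`, hence the objective grows like `c ‖K - K⋆‖²` away from `K⋆`, which gives
uniqueness. Moving to `(Λ₁, Λ₂)` with `Λ₁ + Λ₂ = S + Δ` adds the form `B_Δ`, bounded by `‖Δ‖ ‖D‖`;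
the quadratic growth absorbs its variation in `K`, so
`g(Λ₁, Λ₂) = g(Λ̄₁, Λ̄₂) + tr(C(K⋆) Δ) + O(‖Δ‖²)`.
-/

open Filter Topology Asymptotics

section Normed

variable {E F : Type*} [NormedAddCommGroup E] [NormedAddCommGroup F]

theorem hasFDerivAt_of_norm_sub_le_sq [NormedSpace ℝ E] [NormedSpace ℝ F] {φ : E → F}
    {φ' : E →L[ℝ] F} {x₀ : E} {M : ℝ}
    (h : ∀ᶠ x in 𝓝 x₀, ‖φ x - φ x₀ - φ' (x - x₀)‖ ≤ M * ‖x - x₀‖ ^ 2) :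
    HasFDerivAt φ φ' x₀ := by
  refine hasFDerivAt_iff_isLittleO.mpr (IsBigO.trans_isLittleO (g := fun x => ‖x - x₀‖ ^ 2) ?_ ?_)
  · exact IsBigO.of_bound M (h.mono fun x hx => by simpa using hx)
  · exact (isLittleO_norm_pow_id one_lt_two).comp_tendsto (tendsto_sub_nhds_zero_iff.2 tendsto_id)

theorem norm_fst_add_snd_le (x : E × E) : ‖x.1 + x.2‖ ≤ 2 * ‖x‖ := by
  linarith [norm_add_le x.1 x.2, norm_fst_le x, norm_snd_le x]

theorem exists_isMinOn_of_mul_sq_le [ProperSpace E] {f : E → ℝ} (hf : Continuous f) {s : Set E}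
    (hs : IsClosed s) (hne : s.Nonempty) {c : ℝ} (hc : 0 < c) (a : E)
    (h : ∀ x, c * ‖x - a‖ ^ 2 ≤ f x) : ∃ x ∈ s, IsMinOn f s x := by
  obtain ⟨x₀, hx₀⟩ := hne
  have hdist : Tendsto (fun x => ‖x - a‖) (cocompact E) atTop :=
    tendsto_atTop_mono (fun x => by linarith [norm_sub_norm_le x a])
      (tendsto_atTop_add_const_right _ (-‖a‖) tendsto_norm_cocompact_atTop)
  have hf_top : Tendsto f (cocompact E) atTop :=
    tendsto_atTop_mono h (((tendsto_pow_atTop two_ne_zero).const_mul_atTop hc).comp hdist)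
  exact hf.continuousOn.exists_isMinOn' hs hx₀
    ((hf_top.eventually_ge_atTop (f x₀)).filter_mono inf_le_left)

end Normed

namespace LinearMap.BilinForm

section Module

variable {V : Type*} [AddCommGroup V] [Module ℝ V] {B : LinearMap.BilinForm ℝ V}
  {L : Submodule ℝ V} {a p : V}

theorem apply_sub_eq_zero_of_isMinOn (hB : B.IsSymm) (hp : p ∈ L)
    (hmin : IsMinOn (fun x => B (x - a) (x - a)) L p) {d : V} (hd : d ∈ L) :
    B (p - a) d = 0 := by
  have hquad : ∀ t : ℝ, 0 ≤ B d d * (t * t) + 2 * B (p - a) d * t + 0 := fun t => by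
    have : B (p - a) (p - a) ≤ B (p + t • d - a) (p + t • d - a) :=
      hmin (L.add_mem hp (L.smul_mem t hd))
    simp only [add_sub_right_comm p, map_add, map_smul, LinearMap.add_apply,
      LinearMap.smul_apply, smul_eq_mul] at this
    rw [hB.eq d (p - a)] at this
    linarith
  have := discrim_le_zero hquad
  rw [discrim] at this
  exact pow_eq_zero_iff two_ne_zero |>.mp (by nlinarith [sq_nonneg (B (p - a) d)])

theorem apply_sub_eq_add_of_isMinOn (hB : B.IsSymm) (hp : p ∈ L)
    (hmin : IsMinOn (fun x => B (x - a) (x - a)) L p) {x : V} (hx : x ∈ L) :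
    B (x - a) (x - a) = B (p - a) (p - a) + B (x - p) (x - p) := by
  have hortho := apply_sub_eq_zero_of_isMinOn hB hp hmin (L.sub_mem hx hp)
  have hsymm := hB.eq (x - p) (p - a)
  rw [show x - a = (p - a) + (x - p) by abel]
  simp only [map_add, LinearMap.add_apply]
  linarith

end Module

section Normed

variable {V : Type*} [NormedAddCommGroup V] [Module ℝ V] {B B' : LinearMap.BilinForm ℝ V}
  {L : Submodule ℝ V} {a p : V} {c β : ℝ}

theorem add_mul_sq_norm_le_of_isMinOn (hB : B.IsSymm) (hcoer : ∀ x, c * ‖x‖ ^ 2 ≤ B x x)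
    (hp : p ∈ L) (hmin : IsMinOn (fun x => B (x - a) (x - a)) L p) {x : V} (hx : x ∈ L) :
    B (p - a) (p - a) + c * ‖x - p‖ ^ 2 ≤ B (x - a) (x - a) := by
  rw [apply_sub_eq_add_of_isMinOn hB hp hmin hx]
  linarith [hcoer (x - p)]

theorem eq_of_apply_sub_eq (hc : 0 < c)
    (hstrong : ∀ x ∈ L, B (p - a) (p - a) + c * ‖x - p‖ ^ 2 ≤ B (x - a) (x - a)) {x : V}
    (hx : x ∈ L) (h : B (x - a) (x - a) = B (p - a) (p - a)) : x = p := by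
  have hsq : c * ‖x - p‖ ^ 2 ≤ c * 0 := by linarith [hstrong x hx]
  rw [← sub_eq_zero, ← norm_eq_zero, ← sq_eq_zero_iff]
  exact le_antisymm (le_of_mul_le_mul_left hsq hc) (sq_nonneg _)

theorem abs_sInf_add_sub_le (hc : 0 < c) (hβ : 2 * β ≤ c) (hp : p ∈ L)
    (hstrong : ∀ x ∈ L, B (p - a) (p - a) + c * ‖x - p‖ ^ 2 ≤ B (x - a) (x - a))
    (hB' : ∀ x y, |B' x y| ≤ β * ‖x‖ * ‖y‖) :
    |sInf {t | ∃ x ∈ L, t = (B + B') (x - a) (x - a)} - (B + B') (p - a) (p - a)|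
      ≤ 2 * β ^ 2 * ‖p - a‖ ^ 2 / c := by
  have hlow : ∀ x ∈ L, (B + B') (p - a) (p - a) - 2 * β ^ 2 * ‖p - a‖ ^ 2 / c
      ≤ (B + B') (x - a) (x - a) := fun x hx => by
    have h₁ := abs_le.mp (hB' (p - a) (x - p))
    have h₂ := abs_le.mp (hB' (x - p) (p - a))
    have h₃ := abs_le.mp (hB' (x - p) (x - p))
    have hquad : -(2 * β ^ 2 * ‖p - a‖ ^ 2 / c)
        ≤ c * ‖x - p‖ ^ 2 - 2 * β * ‖p - a‖ * ‖x - p‖ - β * ‖x - p‖ ^ 2 := by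
      rw [neg_le, le_div_iff₀ hc]
      nlinarith [sq_nonneg (c * ‖x - p‖ - 2 * β * ‖p - a‖),
        mul_nonneg (mul_nonneg hc.le (sq_nonneg ‖x - p‖)) (sub_nonneg.2 hβ)]
    have := hstrong x hx
    rw [show x - a = (p - a) + (x - p) by abel] at this ⊢
    simp only [LinearMap.add_apply, map_add] at this h₁ h₂ h₃ ⊢
    nlinarith
  have hmem : (B + B') (p - a) (p - a) ∈ {t | ∃ x ∈ L, t = (B + B') (x - a) (x - a)} :=
    ⟨p, hp, rfl⟩
  have hbdd : BddBelow {t | ∃ x ∈ L, t = (B + B') (x - a) (x - a)} :=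
    ⟨_, fun t ⟨x, hx, ht⟩ => ht ▸ hlow x hx⟩
  rw [abs_sub_le_iff]
  constructor
  · linarith [csInf_le hbdd hmem, show 0 ≤ 2 * β ^ 2 * ‖p - a‖ ^ 2 / c by positivity]
  · linarith [le_csInf ⟨_, hmem⟩ fun t ⟨x, hx, ht⟩ => ht ▸ hlow x hx]

end Normed

end LinearMap.BilinForm

section FrobeniusTrace

variable {m n : Type*} [Fintype m] [Fintype n]

theorem Matrix.trace_transpose_mul_self (A : Matrix m n ℝ) : (Aᵀ * A).trace = ‖A‖ ^ 2 := by
  rw [frobenius_norm_def, ← Real.rpow_natCast, ← Real.rpow_mul (by positivity), trace,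
    Finset.sum_comm]
  norm_num [mul_apply, sq]

theorem Matrix.abs_trace_transpose_mul_le (A B : Matrix m n ℝ) :
    |(Aᵀ * B).trace| ≤ ‖A‖ * ‖B‖ := by
  have hBA : (Bᵀ * A).trace = (Aᵀ * B).trace := by
    rw [← trace_transpose, transpose_mul, transpose_transpose]
  have hquad : ∀ t : ℝ, 0 ≤ ‖B‖ ^ 2 * (t * t) + 2 * (Aᵀ * B).trace * t + ‖A‖ ^ 2 := fun t => by
    have := sq_nonneg ‖A + t • B‖
    rw [← trace_transpose_mul_self] at this
    simp only [transpose_add, transpose_smul, Matrix.add_mul, Matrix.mul_add, Matrix.smul_mul,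
      Matrix.mul_smul, trace_add, trace_smul, smul_eq_mul, trace_transpose_mul_self, hBA] at this
    linarith
  have := discrim_le_zero hquad
  rw [discrim] at this
  exact abs_le_of_sq_le_sq (by nlinarith) (by positivity)

theorem Matrix.abs_trace_mul_le (A : Matrix m n ℝ) (B : Matrix n m ℝ) :
    |(A * B).trace| ≤ ‖A‖ * ‖B‖ := by
  simpa [frobenius_norm_transpose] using abs_trace_transpose_mul_le Aᵀ B

end FrobeniusTrace

section TraceForm

variable {m n : Type*} [Fintype m] [Fintype n]

noncomputable def traceForm (D : Matrix m m ℝ) (S : Matrix n n ℝ) :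
    LinearMap.BilinForm ℝ (Matrix m n ℝ) :=
  LinearMap.mk₂ ℝ (fun X Y => (S * (Xᵀ * D * Y)).trace)
    (fun _ _ _ => by simp [Matrix.add_mul, Matrix.mul_add, trace_add])
    (fun _ _ _ => by simp [Matrix.smul_mul, Matrix.mul_smul, trace_smul])
    (fun _ _ _ => by simp [Matrix.mul_add, trace_add])
    (fun _ _ _ => by simp [Matrix.mul_smul, trace_smul])

variable {D : Matrix m m ℝ} {S : Matrix n n ℝ}

theorem traceForm_apply (X Y : Matrix m n ℝ) : traceForm D S X Y = (S * (Xᵀ * D * Y)).trace :=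
  rfl

theorem traceForm_add (S' : Matrix n n ℝ) :
    traceForm D (S + S') = traceForm D S + traceForm D S' := by
  ext X Y
  simp [traceForm_apply, Matrix.add_mul, trace_add]

theorem traceForm_isSymm (hD : D.IsSymm) (hS : S.IsSymm) : (traceForm D S).IsSymm := by
  refine ⟨fun X Y => ?_⟩
  simp only [traceForm_apply]
  rw [← trace_transpose, transpose_mul, transpose_mul, transpose_mul, transpose_transpose,
    hS.eq, hD.eq, trace_mul_comm, Matrix.mul_assoc]

theorem abs_traceForm_le (X Y : Matrix m n ℝ) :
    |traceForm D S X Y| ≤ ‖S‖ * ‖D‖ * ‖X‖ * ‖Y‖ := by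
  have hXDY : ‖Xᵀ * D * Y‖ ≤ ‖X‖ * ‖D‖ * ‖Y‖ := by
    calc ‖Xᵀ * D * Y‖ ≤ ‖Xᵀ‖ * ‖D‖ * ‖Y‖ :=
          (frobenius_norm_mul _ _).trans (by gcongr; exact frobenius_norm_mul _ _)
      _ = ‖X‖ * ‖D‖ * ‖Y‖ := by rw [frobenius_norm_transpose]
  calc |traceForm D S X Y| ≤ ‖S‖ * ‖Xᵀ * D * Y‖ := abs_trace_mul_le _ _
    _ ≤ ‖S‖ * (‖X‖ * ‖D‖ * ‖Y‖) := by gcongr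
    _ = ‖S‖ * ‖D‖ * ‖X‖ * ‖Y‖ := by ring

theorem traceForm_apply_self_eq_norm_sq {R : Matrix m m ℝ} {T : Matrix n n ℝ} (hD : D = Rᵀ * R)
    (hS : S = T * Tᵀ) (X : Matrix m n ℝ) : traceForm D S X X = ‖R * X * T‖ ^ 2 := by
  rw [← trace_transpose_mul_self, traceForm_apply, hD, hS, Matrix.mul_assoc, trace_mul_comm]
  simp only [transpose_mul, Matrix.mul_assoc]

open scoped MatrixOrder in
theorem exists_pos_mul_sq_norm_le_traceForm [DecidableEq m] [DecidableEq n] (hD : D.PosDef)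
    (hS : S.PosDef) : ∃ c > 0, ∀ X, c * ‖X‖ ^ 2 ≤ traceForm D S X X := by
  obtain ⟨R, hR, hDR⟩ :=
    CStarAlgebra.isStrictlyPositive_iff_eq_star_mul_self.mp hD.isStrictlyPositive
  obtain ⟨T, hT, hST⟩ :=
    CStarAlgebra.isStrictlyPositive_iff_eq_mul_star_self.mp hS.isStrictlyPositive
  rw [star_eq_conjTranspose, conjTranspose_eq_transpose_of_trivial] at hDR hST
  lift R to (Matrix m m ℝ)ˣ using hR
  lift T to (Matrix n n ℝ)ˣ using hT
  set a := ‖(↑R⁻¹ : Matrix m m ℝ)‖ * ‖(↑T⁻¹ : Matrix n n ℝ)‖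
  refine ⟨1 / (a + 1) ^ 2, by positivity, fun X => ?_⟩
  rw [traceForm_apply_self_eq_norm_sq hDR hST]
  set Y : Matrix m n ℝ := (R : Matrix m m ℝ) * X * (T : Matrix n n ℝ)
  have hX : ‖X‖ ≤ a * ‖Y‖ :=
    calc ‖X‖ = ‖(↑R⁻¹ : Matrix m m ℝ) * Y * (↑T⁻¹ : Matrix n n ℝ)‖ := by
          simp [Y, Matrix.mul_assoc]
      _ ≤ ‖(↑R⁻¹ : Matrix m m ℝ)‖ * ‖Y‖ * ‖(↑T⁻¹ : Matrix n n ℝ)‖ :=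
        (frobenius_norm_mul _ _).trans (by gcongr; exact frobenius_norm_mul _ _)
      _ = a * ‖Y‖ := by ring
  have ha : 0 ≤ a := by positivity
  rw [div_mul_eq_mul_div, one_mul, div_le_iff₀ (by positivity)]
  nlinarith [norm_nonneg X, norm_nonneg Y]

theorem exists_isMinOn_traceForm [DecidableEq m] [DecidableEq n] (L : Submodule ℝ (Matrix m n ℝ))
    (K₀ : Matrix m n ℝ) (hD : D.PosDef) (hS : S.PosDef) :
    ∃ c > 0, ∃ p ∈ L, IsMinOn (fun K => traceForm D S (K - K₀) (K - K₀)) L p ∧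
      ∀ K ∈ L, traceForm D S (p - K₀) (p - K₀) + c * ‖K - p‖ ^ 2
        ≤ traceForm D S (K - K₀) (K - K₀) := by
  obtain ⟨c, hc, hcoer⟩ := exists_pos_mul_sq_norm_le_traceForm hD hS
  obtain ⟨p, hp, hmin⟩ := exists_isMinOn_of_mul_sq_le (by simp only [traceForm_apply]; fun_prop)
    L.closed_of_finiteDimensional ⟨0, L.zero_mem⟩ hc K₀ fun K => hcoer _
  have hsymm := traceForm_isSymm (isHermitian_iff_isSymm.mp hD.1) (isHermitian_iff_isSymm.mp hS.1)
  exact ⟨c, hc, p, hp, hmin, fun K hK =>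
    LinearMap.BilinForm.add_mul_sq_norm_le_of_isMinOn hsymm hcoer hp hmin hK⟩

end TraceForm

theorem hasFDerivAt_sInf_traceForm {m : Type*} [Fintype m] {n : ℕ}
    {L : Submodule ℝ (Matrix m (Fin n) ℝ)} {D : Matrix m m ℝ} {K₀ p : Matrix m (Fin n) ℝ}
    {g : Matrix (Fin n) (Fin n) ℝ × Matrix (Fin n) (Fin n) ℝ → ℝ}
    (hg : ∀ Λ, g Λ = sInf {t | ∃ K ∈ L, t = traceForm D (Λ.1 + Λ.2) (K - K₀) (K - K₀)})
    {Λb₁ Λb₂ : Matrix (Fin n) (Fin n) ℝ} {c : ℝ} (hc : 0 < c) (hp : p ∈ L)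
    (hstrong : ∀ K ∈ L, traceForm D (Λb₁ + Λb₂) (p - K₀) (p - K₀) + c * ‖K - p‖ ^ 2
      ≤ traceForm D (Λb₁ + Λb₂) (K - K₀) (K - K₀)) :
    HasFDerivAt g (traceCLM ((p - K₀)ᵀ * D * (p - K₀))) (Λb₁, Λb₂) := by
  set B := traceForm D (Λb₁ + Λb₂)
  have hgb : g (Λb₁, Λb₂) = B (p - K₀) (p - K₀) := by
    refine (hg _).trans (IsLeast.csInf_eq ⟨⟨p, hp, rfl⟩, ?_⟩)
    rintro t ⟨K, hK, rfl⟩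
    linarith [hstrong K hK, mul_nonneg hc.le (sq_nonneg ‖K - p‖)]
  refine hasFDerivAt_of_norm_sub_le_sq (M := 8 * ‖D‖ ^ 2 * ‖p - K₀‖ ^ 2 / c) ?_
  filter_upwards [Metric.ball_mem_nhds _ (by positivity : 0 < c / (4 * ‖D‖ + 1))] with Λ hΛ
  rw [Metric.mem_ball, dist_eq_norm] at hΛ
  set Δ := Λ.1 + Λ.2 - (Λb₁ + Λb₂)
  have hΔ_eq : (Λ - (Λb₁, Λb₂)).1 + (Λ - (Λb₁, Λb₂)).2 = Δ := by
    simp only [Prod.fst_sub, Prod.snd_sub, Δ]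
    abel
  have hΔ : ‖Δ‖ ≤ 2 * ‖Λ - (Λb₁, Λb₂)‖ := hΔ_eq ▸ norm_fst_add_snd_le _
  have hβ : 2 * (‖Δ‖ * ‖D‖) ≤ c := by
    have := (lt_div_iff₀ (by positivity)).mp hΛ
    nlinarith [norm_nonneg D, norm_nonneg (Λ - (Λb₁, Λb₂))]
  have hgΛ : g Λ = sInf {t | ∃ K ∈ L, t = (B + traceForm D Δ) (K - K₀) (K - K₀)} := by
    rw [hg, ← traceForm_add, add_sub_cancel]
  have hlin : traceCLM ((p - K₀)ᵀ * D * (p - K₀)) (Λ - (Λb₁, Λb₂))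
      = traceForm D Δ (p - K₀) (p - K₀) := by
    change ((p - K₀)ᵀ * D * (p - K₀) * ((Λ - (Λb₁, Λb₂)).1 + (Λ - (Λb₁, Λb₂)).2)).trace = _
    rw [hΔ_eq, trace_mul_comm]
    rfl
  have key := LinearMap.BilinForm.abs_sInf_add_sub_le hc hβ hp hstrong
    (fun X Y => (abs_traceForm_le X Y).trans_eq (by ring))
  rw [LinearMap.add_apply, LinearMap.add_apply, ← sub_sub] at key
  rw [hgΛ, hgb, Real.norm_eq_abs]
  -- not `rw`: in the goal, `traceCLM` is coerced through the product's `NormedSpace` instance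
  erw [hlin]
  refine key.trans ?_
  have hΔsq : ‖Δ‖ ^ 2 ≤ 4 * ‖Λ - (Λb₁, Λb₂)‖ ^ 2 := by nlinarith [norm_nonneg Δ]
  rw [div_mul_eq_mul_div, div_le_div_iff_of_pos_right hc]
  nlinarith [mul_le_mul_of_nonneg_left hΔsq (mul_nonneg (sq_nonneg ‖D‖) (sq_nonneg ‖p - K₀‖))]

theorem stmt13_general {m n : ℕ} (L : Submodule ℝ (Matrix (Fin m) (Fin n) ℝ))
    (D : Matrix (Fin m) (Fin m) ℝ) (hD : D.PosDef) (Kor : Matrix (Fin m) (Fin n) ℝ)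
    (Cmap : Matrix (Fin m) (Fin n) ℝ → Matrix (Fin n) (Fin n) ℝ)
    (hCmap : ∀ K, Cmap K = (K - Kor)ᵀ * D * (K - Kor))
    (g : Matrix (Fin n) (Fin n) ℝ × Matrix (Fin n) (Fin n) ℝ → ℝ)
    (hg : ∀ Λ, g Λ = sInf {c : ℝ | ∃ K ∈ L, c = ((Λ.1 + Λ.2) * Cmap K).trace})
    (Λb₁ Λb₂ : Matrix (Fin n) (Fin n) ℝ)
    (hpd : (Λb₁ + Λb₂).PosDef) :
    ∃ Kstar ∈ L,
      (∀ K ∈ L, ((Λb₁ + Λb₂) * Cmap Kstar).trace ≤ ((Λb₁ + Λb₂) * Cmap K).trace) ∧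
      (∀ K ∈ L, ((Λb₁ + Λb₂) * Cmap K).trace = ((Λb₁ + Λb₂) * Cmap Kstar).trace →
        K = Kstar) ∧
      HasFDerivAt g (traceCLM (Cmap Kstar)) (Λb₁, Λb₂) := by
  obtain rfl : Cmap = fun K => (K - Kor)ᵀ * D * (K - Kor) := funext hCmap
  obtain ⟨c, hc, Ks, hKs, hmin, hstrong⟩ := exists_isMinOn_traceForm L Kor hD hpd
  exact ⟨Ks, hKs, fun K hK => hmin hK,
    fun K hK hKeq => LinearMap.BilinForm.eq_of_apply_sub_eq hc hstrong hK hKeq,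
    hasFDerivAt_sInf_traceForm hg hc hKs hstrong⟩

/-- At any `(Λ̄₁,Λ̄₂) ∈ S₊ⁿ × S₊ⁿ` with `Λ̄₁+Λ̄₂ ≻ 0`, the dual
function `g(Λ₁,Λ₂) = inf_{K∈L} tr((Λ₁+Λ₂)C(K))` is Fréchet differentiable, with
derivative `(A₁,A₂) ↦ tr(C(K⋆)(A₁+A₂))`, where `K⋆` is the unique minimizer of
`K ↦ tr((Λ̄₁+Λ̄₂)C(K))` over `L`. -/
theorem stmt13 {m n : ℕ} (L : Submodule ℝ (Matrix (Fin m) (Fin n) ℝ))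
    (D : Matrix (Fin m) (Fin m) ℝ) (hD : D.PosDef) (Kor : Matrix (Fin m) (Fin n) ℝ)
    (Cmap : Matrix (Fin m) (Fin n) ℝ → Matrix (Fin n) (Fin n) ℝ)
    (hCmap : ∀ K, Cmap K = (K - Kor)ᵀ * D * (K - Kor))
    (g : Matrix (Fin n) (Fin n) ℝ × Matrix (Fin n) (Fin n) ℝ → ℝ)
    (hg : ∀ Λ, g Λ = sInf {c : ℝ | ∃ K ∈ L, c = ((Λ.1 + Λ.2) * Cmap K).trace})
    (Λb₁ Λb₂ : Matrix (Fin n) (Fin n) ℝ) (hΛb₁ : Λb₁.PosSemidef) (hΛb₂ : Λb₂.PosSemidef)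
    (hpd : (Λb₁ + Λb₂).PosDef) :
    ∃ Kstar ∈ L,
      (∀ K ∈ L, ((Λb₁ + Λb₂) * Cmap Kstar).trace ≤ ((Λb₁ + Λb₂) * Cmap K).trace) ∧
      (∀ K ∈ L, ((Λb₁ + Λb₂) * Cmap K).trace = ((Λb₁ + Λb₂) * Cmap Kstar).trace →
        K = Kstar) ∧
      HasFDerivAt g (traceCLM (Cmap Kstar)) (Λb₁, Λb₂) :=
  stmt13_general L D hD Kor Cmap hCmap g hg Λb₁ Λb₂ hpd
end

section
/- Let p ∈ [1,∞], r ≥ 0, and let X ∈ Sⁿ have eigendecomposition X = U·diag(λ)·Uᵀ with U an n×n orthogonal matrix and λ ∈ ℝⁿ the vector of eigenvalues. Let S_r^p := {Y ∈ Sⁿ : ‖Y‖_p ≤ r} and B_r^p := {x ∈ ℝⁿ : ‖x‖_p ≤ r}. Then the orthogonal projection of X onto S_r^p with respect to the Frobenius inner product satisfies Π_{S_r^p}(X) = U·diag(Π_{B_r^p}(λ))·Uᵀ, where Π_{B_r^p}(λ) is the Euclidean projection of λ onto B_r^p. -/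
open Matrix
open scoped ENNReal

noncomputable def frobNorm {n m : ℕ} (A : Matrix (Fin m) (Fin n) ℝ) : ℝ :=
  Real.sqrt ((Aᵀ * A).trace)

/-- The ℓ_p norm of a vector in ℝⁿ, for `p ∈ [1,∞]`. -/
noncomputable def lpNorm {n : ℕ} (p : ℝ≥0∞) (x : Fin n → ℝ) : ℝ :=
  if p = ⊤ then ⨆ i, |x i| else (∑ i, |x i| ^ p.toReal) ^ (1 / p.toReal)

/-!
Conjugation by `U` preserves both the Frobenius and the Schatten norms, so everything can be
compared in the eigenbasis of `X`. If `Y` is symmetric with spectral decomposition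
`Y = V diag(μ) Vᵀ`, the diagonal of `Y` is `W μ` with `W = (V_ij²)` doubly stochastic, so Jensen's
inequality gives `‖diag Y‖_p ≤ ‖μ‖_p = ‖Y‖_p`: the diagonal of any competitor lies in `B_r^p`.
Dropping off-diagonal entries only decreases the Frobenius distance to `diag(λ)`, and among
vectors of `B_r^p` the projection of `λ` is the closest one.
-/

section Multiset

variable {ι : Type*} [Fintype ι] {f g : ι → ℝ}

lemma sum_comp_eq_of_map_univ_eq (h : Finset.univ.val.map f = Finset.univ.val.map g)
    (φ : ℝ → ℝ) : ∑ i, φ (f i) = ∑ i, φ (g i) := by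
  have := congrArg (fun s => (s.map φ).sum) h
  simpa only [Multiset.map_map, Function.comp_def, Finset.sum_eq_multiset_sum] using this

lemma iSup_eq_of_map_univ_eq (h : Finset.univ.val.map f = Finset.univ.val.map g) :
    ⨆ i, f i = ⨆ i, g i := by
  have hrange : Set.range f = Set.range g := by
    ext x
    simpa using congrArg (x ∈ ·) h
  rw [iSup, iSup, hrange]

end Multiset

lemma map_univ_singVals {n : ℕ} (A : Matrix (Fin n) (Fin n) ℝ) :
    Finset.univ.val.map (singVals A) = (Aᴴ * A).charpoly.roots.map Real.sqrt := by
  rw [(isHermitian_conjTranspose_mul_self A).roots_charpoly_eq_eigenvalues, Multiset.map_map]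
  rfl

lemma schattenNorm_eq_of_charpoly_eq {n : ℕ} (p : ℝ≥0∞) {A B : Matrix (Fin n) (Fin n) ℝ}
    (h : (Aᴴ * A).charpoly = (Bᴴ * B).charpoly) : schattenNorm p A = schattenNorm p B := by
  have hsv : Finset.univ.val.map (singVals A) = Finset.univ.val.map (singVals B) := by
    rw [map_univ_singVals, map_univ_singVals, h]
  unfold schattenNorm
  rw [iSup_eq_of_map_univ_eq hsv, sum_comp_eq_of_map_univ_eq hsv (· ^ p.toReal)]

open Polynomial in
lemma roots_charpoly_diagonal {ι R : Type*} [Fintype ι] [DecidableEq ι] [CommRing R] [IsDomain R]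
    (d : ι → R) : (diagonal d).charpoly.roots = Finset.univ.val.map d := by
  rw [charpoly_diagonal, ← roots_multiset_prod_X_sub_C (Finset.univ.val.map d), Multiset.map_map]
  rfl

lemma schattenNorm_conj {n : ℕ} (p : ℝ≥0∞) {U : Matrix (Fin n) (Fin n) ℝ} (hU : Uᵀ * U = 1)
    (A : Matrix (Fin n) (Fin n) ℝ) : schattenNorm p (U * A * Uᵀ) = schattenNorm p A := by
  apply schattenNorm_eq_of_charpoly_eq
  have hgram : (U * A * Uᵀ)ᴴ * (U * A * Uᵀ) = U * (Aᴴ * A * Uᵀ) := by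
    simp only [conjTranspose_eq_transpose_of_trivial, transpose_mul, transpose_transpose,
      Matrix.mul_assoc]
    rw [← Matrix.mul_assoc Uᵀ U, hU, Matrix.one_mul]
  rw [hgram, charpoly_mul_comm, Matrix.mul_assoc, hU, Matrix.mul_one]

lemma schattenNorm_diagonal {n : ℕ} (p : ℝ≥0∞) (d : Fin n → ℝ) :
    schattenNorm p (diagonal d) = lpNorm p d := by
  have hsv : Finset.univ.val.map (singVals (diagonal d)) = Finset.univ.val.map (|d ·|) := by
    rw [map_univ_singVals, diagonal_conjTranspose, star_trivial, diagonal_mul_diagonal,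
      roots_charpoly_diagonal, Multiset.map_map]
    exact Multiset.map_congr rfl fun i _ => Real.sqrt_mul_self_eq_abs (d i)
  unfold schattenNorm lpNorm
  rw [iSup_eq_of_map_univ_eq hsv, sum_comp_eq_of_map_univ_eq hsv (· ^ p.toReal)]

lemma schattenNorm_conj_diagonal {n : ℕ} (p : ℝ≥0∞) {U : Matrix (Fin n) (Fin n) ℝ}
    (hU : Uᵀ * U = 1) (d : Fin n → ℝ) : schattenNorm p (U * diagonal d * Uᵀ) = lpNorm p d := by
  rw [schattenNorm_conj p hU, schattenNorm_diagonal]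

lemma Matrix.IsHermitian.eq_eigenvectorUnitary_mul_diagonal_mul_transpose {ι : Type*} [Fintype ι]
    [DecidableEq ι] {A : Matrix ι ι ℝ} (hA : A.IsHermitian) :
    A = (hA.eigenvectorUnitary : Matrix ι ι ℝ) * diagonal hA.eigenvalues *
      (hA.eigenvectorUnitary : Matrix ι ι ℝ)ᵀ := by
  conv_lhs => rw [hA.spectral_theorem]
  simp [Unitary.conjStarAlgAut_apply, star_eq_conjTranspose, conjTranspose_eq_transpose_of_trivial]

lemma map_sq_mem_doublyStochastic {ι : Type*} [Fintype ι] [DecidableEq ι] {V : Matrix ι ι ℝ}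
    (hV : V ∈ unitaryGroup ι ℝ) : V.map (· ^ 2) ∈ doublyStochastic ℝ ι := by
  refine mem_doublyStochastic_iff_sum.mpr ⟨fun i j => sq_nonneg _, fun i => ?_, fun j => ?_⟩
  · simpa [mul_apply, sq] using congrFun (congrFun (mem_unitaryGroup_iff.mp hV) i) i
  · simpa [mul_apply, sq] using congrFun (congrFun (mem_unitaryGroup_iff'.mp hV) j) j

lemma diag_mul_diagonal_mul_transpose {ι R : Type*} [Fintype ι] [DecidableEq ι] [CommSemiring R]
    (V : Matrix ι ι R) (d : ι → R) : (V * diagonal d * Vᵀ).diag = V.map (· ^ 2) *ᵥ d := by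
  ext i
  simp only [diag_apply, mul_apply, diagonal_apply, mul_ite, mul_zero, Finset.sum_ite_eq',
    Finset.mem_univ, if_true, transpose_apply, mulVec, dotProduct, map_apply]
  exact Finset.sum_congr rfl fun j _ => by ring

lemma lpNorm_mulVec_le_of_mem_doublyStochastic {n : ℕ} {p : ℝ≥0∞} (hp : 1 ≤ p)
    {W : Matrix (Fin n) (Fin n) ℝ} (hW : W ∈ doublyStochastic ℝ (Fin n)) (x : Fin n → ℝ) :
    lpNorm p (W *ᵥ x) ≤ lpNorm p x := by
  have hW0 : ∀ i j, 0 ≤ W i j := fun i j => nonneg_of_mem_doublyStochastic hW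
  have habs (i) : |(W *ᵥ x) i| ≤ ∑ j, W i j * |x j| :=
    calc |(W *ᵥ x) i| = |∑ j, W i j * x j| := rfl
      _ ≤ ∑ j, |W i j * x j| := Finset.abs_sum_le_sum_abs _ _
      _ = ∑ j, W i j * |x j| := by simp_rw [abs_mul, abs_of_nonneg (hW0 i _)]
  unfold lpNorm
  split_ifs with htop
  · refine Real.iSup_le (fun i => (habs i).trans ?_) (Real.iSup_nonneg fun j => abs_nonneg _)
    calc ∑ j, W i j * |x j| ≤ ∑ j, W i j * ⨆ k, |x k| :=
          Finset.sum_le_sum fun j _ =>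
            mul_le_mul_of_nonneg_left
              (le_ciSup (f := (|x ·|)) (Finite.bddAbove_range _) j) (hW0 i j)
      _ = ⨆ k, |x k| := by rw [← Finset.sum_mul, sum_row_of_mem_doublyStochastic hW, one_mul]
  · have hq : 1 ≤ p.toReal := by simpa using ENNReal.toReal_mono htop hp
    have hsum : ∑ i, |(W *ᵥ x) i| ^ p.toReal ≤ ∑ i, |x i| ^ p.toReal :=
      calc ∑ i, |(W *ᵥ x) i| ^ p.toReal ≤ ∑ i, (W *ᵥ fun j => |x j| ^ p.toReal) i :=
            Finset.sum_le_sum fun i _ =>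
              (Real.rpow_le_rpow (abs_nonneg _) (habs i) (by linarith)).trans <|
                Real.rpow_arith_mean_le_arith_mean_rpow _ _ _ (fun j _ => hW0 i j)
                  (sum_row_of_mem_doublyStochastic hW i) (fun j _ => abs_nonneg _) hq
        _ = ∑ i, |x i| ^ p.toReal := sum_mulVec_of_mem_doublyStochastic hW
    exact Real.rpow_le_rpow (Finset.sum_nonneg fun i _ => by positivity) hsum (by positivity)

lemma lpNorm_diag_le_schattenNorm {n : ℕ} {p : ℝ≥0∞} (hp : 1 ≤ p)
    {A : Matrix (Fin n) (Fin n) ℝ} (hA : A.IsHermitian) : lpNorm p A.diag ≤ schattenNorm p A := by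
  set V : Matrix (Fin n) (Fin n) ℝ := ↑hA.eigenvectorUnitary
  have hV : V ∈ unitaryGroup (Fin n) ℝ := hA.eigenvectorUnitary.2
  have hspec := hA.eq_eigenvectorUnitary_mul_diagonal_mul_transpose
  have hdiag : A.diag = V.map (· ^ 2) *ᵥ hA.eigenvalues := by
    conv_lhs => rw [hspec]
    exact diag_mul_diagonal_mul_transpose V _
  have hnorm : schattenNorm p A = lpNorm p hA.eigenvalues := by
    conv_lhs => rw [hspec]
    exact schattenNorm_conj_diagonal p (mem_unitaryGroup_iff'.mp hV) _
  rw [hdiag, hnorm]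
  exact lpNorm_mulVec_le_of_mem_doublyStochastic hp (map_sq_mem_doublyStochastic hV) _

lemma frobNorm_eq_sqrt_sum_sq {m n : ℕ} (A : Matrix (Fin m) (Fin n) ℝ) :
    frobNorm A = √(∑ i, ∑ j, A i j ^ 2) := by
  simp only [frobNorm, trace, diag_apply, mul_apply, transpose_apply, ← sq]
  rw [Finset.sum_comm]

lemma frobNorm_conj {n : ℕ} {U : Matrix (Fin n) (Fin n) ℝ} (hU : Uᵀ * U = 1)
    (A : Matrix (Fin n) (Fin n) ℝ) : frobNorm (U * A * Uᵀ) = frobNorm A := by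
  have hgram : (U * A * Uᵀ)ᵀ * (U * A * Uᵀ) = U * (Aᵀ * A * Uᵀ) := by
    simp only [transpose_mul, transpose_transpose, Matrix.mul_assoc]
    rw [← Matrix.mul_assoc Uᵀ U, hU, Matrix.one_mul]
  rw [frobNorm, frobNorm, hgram, trace_mul_comm, Matrix.mul_assoc, hU, Matrix.mul_one]

lemma frobNorm_diagonal {n : ℕ} (v : Fin n → ℝ) : frobNorm (diagonal v) = √(∑ i, v i ^ 2) := by
  simp [frobNorm_eq_sqrt_sum_sq, diagonal_apply, ite_pow]

lemma sqrt_sum_diag_sq_le_frobNorm {n : ℕ} (A : Matrix (Fin n) (Fin n) ℝ) :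
    √(∑ i, A i i ^ 2) ≤ frobNorm A := by
  rw [frobNorm_eq_sqrt_sum_sq]
  gcongr with i
  exact Finset.single_le_sum (fun j _ => sq_nonneg (A i j)) (Finset.mem_univ i)

theorem stmt15_general {n : ℕ} (p : ℝ≥0∞) (hp : 1 ≤ p) (r : ℝ)
    (X U : Matrix (Fin n) (Fin n) ℝ) (lam : Fin n → ℝ)
    (hU : U * Uᵀ = 1) (hU' : Uᵀ * U = 1)
    (hX : X = U * Matrix.diagonal lam * Uᵀ)
    (pr : Fin n → ℝ) (hprmem : lpNorm p pr ≤ r)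
    (hpr : ∀ x : Fin n → ℝ, lpNorm p x ≤ r →
      (∑ i, (lam i - pr i) ^ 2) ≤ (∑ i, (lam i - x i) ^ 2)) :
    (U * Matrix.diagonal pr * Uᵀ).IsSymm ∧
    schattenNorm p (U * Matrix.diagonal pr * Uᵀ) ≤ r ∧
    ∀ Y : Matrix (Fin n) (Fin n) ℝ, Y.IsSymm → schattenNorm p Y ≤ r →
      frobNorm (X - U * Matrix.diagonal pr * Uᵀ) ≤ frobNorm (X - Y) := by
  refine ⟨?_, (schattenNorm_conj_diagonal p hU' pr).trans_le hprmem, fun Y hY hYr => ?_⟩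
  · simp [IsSymm, transpose_mul, Matrix.mul_assoc]
  set Z := Uᵀ * Y * U
  have hUt : Uᵀᵀ * Uᵀ = 1 := by rwa [transpose_transpose]
  have hZ : Z.IsHermitian := by simp [Z, IsHermitian, transpose_mul, hY.eq, Matrix.mul_assoc]
  have hZr : lpNorm p Z.diag ≤ r := by
    refine (lpNorm_diag_le_schattenNorm hp hZ).trans ?_
    simpa only [Z, transpose_transpose] using (schattenNorm_conj p hUt Y).trans_le hYr
  have hXY : X - Y = U * (diagonal lam - Z) * Uᵀ := by
    simp only [hX, Z, Matrix.mul_sub, Matrix.sub_mul, ← Matrix.mul_assoc, hU, Matrix.one_mul]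
    simp only [Matrix.mul_assoc, hU, Matrix.mul_one]
  calc frobNorm (X - U * diagonal pr * Uᵀ) = √(∑ i, (lam i - pr i) ^ 2) := by
        rw [hX, ← Matrix.sub_mul, ← Matrix.mul_sub, diagonal_sub, frobNorm_conj hU',
          frobNorm_diagonal]
    _ ≤ √(∑ i, (lam i - Z i i) ^ 2) := Real.sqrt_le_sqrt (hpr _ hZr)
    _ ≤ frobNorm (diagonal lam - Z) := by
        simpa using sqrt_sum_diag_sq_le_frobNorm (diagonal lam - Z)
    _ = frobNorm (X - Y) := by rw [hXY, frobNorm_conj hU']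

/-- If `X = U diag(λ) Uᵀ` with `U` orthogonal, and `π` is the Euclidean
projection of `λ` onto the `ℓ_p`-ball `B_r^p`, then `U diag(π) Uᵀ` is the Frobenius
projection of `X` onto the Schatten ball `S_r^p = {Y ∈ Sⁿ : ‖Y‖_p ≤ r}`; i.e. it belongs
to `S_r^p` and is at minimal Frobenius distance from `X` among all points of `S_r^p`. -/
theorem stmt15 {n : ℕ} (p : ℝ≥0∞) (hp : 1 ≤ p) (r : ℝ) (hr : 0 ≤ r)
    (X U : Matrix (Fin n) (Fin n) ℝ) (lam : Fin n → ℝ)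
    (hXsymm : X.IsSymm) (hU : U * Uᵀ = 1) (hU' : Uᵀ * U = 1)
    (hX : X = U * Matrix.diagonal lam * Uᵀ)
    (pr : Fin n → ℝ) (hprmem : lpNorm p pr ≤ r)
    (hpr : ∀ x : Fin n → ℝ, lpNorm p x ≤ r →
      (∑ i, (lam i - pr i) ^ 2) ≤ (∑ i, (lam i - x i) ^ 2)) :
    (U * Matrix.diagonal pr * Uᵀ).IsSymm ∧
    schattenNorm p (U * Matrix.diagonal pr * Uᵀ) ≤ r ∧
    ∀ Y : Matrix (Fin n) (Fin n) ℝ, Y.IsSymm → schattenNorm p Y ≤ r →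
      frobNorm (X - U * Matrix.diagonal pr * Uᵀ) ≤ frobNorm (X - Y) :=
  stmt15_general p hp r X U lam hU hU' hX pr hprmem hpr
end

section
/- Let p ∈ [1,∞], r ≥ 0, and S_r^p := {Y ∈ Sⁿ : ‖Y‖_p ≤ r}. If X ∈ S₊ⁿ (i.e., X is symmetric positive semidefinite), then the Frobenius-orthogonal projection Π_{S_r^p}(X) is also positive semidefinite, and consequently Π_{S_r^p ∩ S₊ⁿ}(X) = Π_{S_r^p}(X). -/
open Matrix
open scoped ENNReal

/-!
Write the symmetric matrix `M = U diag(λ) Uᵀ` as `M = M⁺ - M⁻` with `M⁺ = U diag(λ⁺) Uᵀ` and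
`M⁻ = U diag(λ⁻) Uᵀ`. Both parts are positive semidefinite and `M⁺ M⁻ = 0`. The singular values
of `M⁺` are the `λᵢ⁺ ≤ |λᵢ|`, so `M⁺` lies in every Schatten ball containing `M`. Expanding the
Frobenius norm gives `‖X - M⁺‖² = ‖X - M‖² - 2 tr(X M⁻) - ‖M⁻‖²`, and `tr(X M⁻) ≥ 0` since
both `X` and `M⁻` are positive semidefinite. Minimality of `M` therefore forces `M⁻ = 0`, i.e.
`M = M⁺ ⪰ 0`.
-/

section Conj

variable {ι : Type*} [Fintype ι] [DecidableEq ι] (U : unitaryGroup ι ℝ)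

theorem charpoly_unitary_conj (A : Matrix ι ι ℝ) :
    (U.val * A * star U.val).charpoly = A.charpoly := by
  rw [charpoly_mul_comm, ← mul_assoc, UnitaryGroup.star_mul_self, one_mul]

theorem unitary_conj_mul_unitary_conj (A B : Matrix ι ι ℝ) :
    (U.val * A * star U.val) * (U.val * B * star U.val) = U.val * (A * B) * star U.val := by
  simp only [mul_assoc, ← mul_assoc (star U.val) U.val, UnitaryGroup.star_mul_self, one_mul]

theorem transpose_unitary_conj (A : Matrix ι ι ℝ) :
    (U.val * A * star U.val)ᵀ = U.val * Aᵀ * star U.val := by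
  simp [star_eq_conjTranspose, conjTranspose_eq_transpose_of_trivial, mul_assoc]

theorem posSemidef_unitary_conj_diagonal {d : ι → ℝ} (hd : 0 ≤ d) :
    (U.val * diagonal d * star U.val).PosSemidef := by
  rw [star_eq_conjTranspose]
  exact (posSemidef_diagonal_iff.mpr hd).mul_mul_conjTranspose_same _

end Conj

theorem Matrix.PosSemidef.trace_mul_nonneg {ι : Type*} [Fintype ι] {A B : Matrix ι ι ℝ}
    (hA : A.PosSemidef) (hB : B.PosSemidef) : 0 ≤ (A * B).trace := by
  classical
  open scoped MatrixOrder Matrix.Norms.L2Operator in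
  obtain ⟨C, rfl⟩ := CStarAlgebra.nonneg_iff_eq_star_mul_self.mp hA.nonneg
  rw [star_eq_conjTranspose, mul_assoc, trace_mul_comm]
  exact (hB.mul_mul_conjTranspose_same C).trace_nonneg

theorem map_eigenvalues_diagonal {ι : Type*} [Fintype ι] [DecidableEq ι] (d : ι → ℝ) :
    Finset.univ.val.map (isHermitian_diagonal d).eigenvalues = Finset.univ.val.map d := by
  have h := (isHermitian_diagonal d).roots_charpoly_eq_eigenvalues
  rw [charpoly_diagonal, Polynomial.roots_prod] at h
  · simpa [RCLike.ofReal_real_eq_id] using h.symm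
  · simp [Finset.prod_ne_zero_iff, Polynomial.X_sub_C_ne_zero]

section MapUniv

variable {ι α β : Type*} [Fintype ι] {f g : ι → α}

theorem sum_comp_eq_of_map_univ_val_eq [AddCommMonoid β]
    (h : Finset.univ.val.map f = Finset.univ.val.map g) (φ : α → β) :
    ∑ i, φ (f i) = ∑ i, φ (g i) := by
  simp only [Finset.sum_eq_multiset_sum, ← Function.comp_apply (f := φ), ← Multiset.map_map, h]

theorem iSup_eq_of_map_univ_val_eq [SupSet α]
    (h : Finset.univ.val.map f = Finset.univ.val.map g) : ⨆ i, f i = ⨆ i, g i := by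
  have hrange : Set.range f = Set.range g := by
    ext x
    simpa using congrArg (x ∈ ·) h
  rw [iSup, iSup, hrange]

end MapUniv

theorem singVals_unitary_conj {n : ℕ} (U : unitaryGroup (Fin n) ℝ)
    (A : Matrix (Fin n) (Fin n) ℝ) :
    singVals (U.val * A * star U.val) = singVals A := by
  have hcharpoly : ((U.val * A * star U.val)ᴴ * (U.val * A * star U.val)).charpoly
      = (Aᴴ * A).charpoly := by
    simp only [conjTranspose_eq_transpose_of_trivial, transpose_unitary_conj,
      unitary_conj_mul_unitary_conj, charpoly_unitary_conj]
  unfold singVals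
  rw [((isHermitian_conjTranspose_mul_self _).eigenvalues_eq_eigenvalues_iff
    (isHermitian_conjTranspose_mul_self A)).mpr hcharpoly]

theorem map_singVals_diagonal {n : ℕ} (d : Fin n → ℝ) :
    Finset.univ.val.map (singVals (diagonal d)) = Finset.univ.val.map fun i => |d i| := by
  have hsq : (diagonal d)ᴴ * diagonal d = diagonal fun i => d i * d i := by
    simp [conjTranspose_eq_transpose_of_trivial]
  have heig : (isHermitian_conjTranspose_mul_self (diagonal d)).eigenvalues
      = (isHermitian_diagonal fun i => d i * d i).eigenvalues :=
    (IsHermitian.eigenvalues_eq_eigenvalues_iff _ _).mpr (by rw [hsq])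
  have h := congrArg (Multiset.map Real.sqrt) (map_eigenvalues_diagonal fun i => d i * d i)
  simp only [Multiset.map_map, ← heig, Function.comp_def, Real.sqrt_mul_self_eq_abs] at h
  exact h

theorem schattenNorm_unitary_conj {n : ℕ} (p : ℝ≥0∞) (U : unitaryGroup (Fin n) ℝ)
    (A : Matrix (Fin n) (Fin n) ℝ) :
    schattenNorm p (U.val * A * star U.val) = schattenNorm p A := by
  simp only [schattenNorm, singVals_unitary_conj]

theorem schattenNorm_diagonal_s16 {n : ℕ} (p : ℝ≥0∞) (d : Fin n → ℝ) :
    schattenNorm p (diagonal d) =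
      if p = ⊤ then ⨆ i, |d i| else (∑ i, |d i| ^ p.toReal) ^ (1 / p.toReal) := by
  rw [schattenNorm, iSup_eq_of_map_univ_val_eq (map_singVals_diagonal d),
    sum_comp_eq_of_map_univ_val_eq (map_singVals_diagonal d) (· ^ p.toReal)]

theorem schattenNorm_diagonal_le_of_abs_le {n : ℕ} (p : ℝ≥0∞) {a b : Fin n → ℝ}
    (h : ∀ i, |b i| ≤ |a i|) : schattenNorm p (diagonal b) ≤ schattenNorm p (diagonal a) := by
  rw [schattenNorm_diagonal_s16, schattenNorm_diagonal_s16]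
  split_ifs
  · cases isEmpty_or_nonempty (Fin n)
    · simp
    · exact ciSup_mono (Set.finite_range _).bddAbove h
  · gcongr (∑ i, ?_ ^ _) ^ _ with i
    exact h i

section Frobenius

variable {m n : ℕ}

theorem frobNorm_nonneg (A : Matrix (Fin m) (Fin n) ℝ) : 0 ≤ frobNorm A := Real.sqrt_nonneg _

theorem frobNorm_sq (A : Matrix (Fin m) (Fin n) ℝ) : frobNorm A ^ 2 = (Aᵀ * A).trace := by
  rw [frobNorm, Real.sq_sqrt]
  simpa [conjTranspose_eq_transpose_of_trivial] using
    (posSemidef_conjTranspose_mul_self A).trace_nonneg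

theorem frobNorm_eq_zero_iff {A : Matrix (Fin m) (Fin n) ℝ} : frobNorm A = 0 ↔ A = 0 := by
  rw [← pow_eq_zero_iff two_ne_zero, frobNorm_sq, ← conjTranspose_eq_transpose_of_trivial,
    trace_conjTranspose_mul_self_eq_zero_iff]

theorem frobNorm_add_sq (A B : Matrix (Fin m) (Fin n) ℝ) :
    frobNorm (A + B) ^ 2 = frobNorm A ^ 2 + 2 * (Aᵀ * B).trace + frobNorm B ^ 2 := by
  have hsymm : (Bᵀ * A).trace = (Aᵀ * B).trace := by
    rw [← trace_transpose, transpose_mul, transpose_transpose]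
  simp only [frobNorm_sq, transpose_add, Matrix.add_mul, Matrix.mul_add, trace_add, hsymm]
  ring

end Frobenius

theorem eq_zero_of_frobNorm_sub_le {n : ℕ} {X P N : Matrix (Fin n) (Fin n) ℝ}
    (hX : X.PosSemidef) (hN : N.PosSemidef) (hPN : Pᵀ * N = 0)
    (h : frobNorm (X - (P - N)) ≤ frobNorm (X - P)) : N = 0 := by
  have hcross : 0 ≤ ((X - P)ᵀ * N).trace := by
    rw [transpose_sub, sub_mul, hPN, sub_zero, ← conjTranspose_eq_transpose_of_trivial,
      hX.isHermitian.eq]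
    exact hX.trace_mul_nonneg hN
  have hexpand := frobNorm_add_sq (X - P) N
  rw [show X - (P - N) = X - P + N by abel] at h
  have hsq : frobNorm N ^ 2 ≤ 0 := by
    linarith [pow_le_pow_left₀ (frobNorm_nonneg _) h 2]
  exact frobNorm_eq_zero_iff.mp (pow_eq_zero_iff two_ne_zero |>.mp (le_antisymm hsq (sq_nonneg _)))

namespace Matrix.IsHermitian

variable {ι : Type*} [Fintype ι] [DecidableEq ι] {A : Matrix ι ι ℝ} (hA : A.IsHermitian)

theorem eq_unitary_conj_diagonal :
    A = hA.eigenvectorUnitary.val * diagonal hA.eigenvalues * star hA.eigenvectorUnitary.val := by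
  conv_lhs => rw [hA.spectral_theorem, Unitary.conjStarAlgAut_apply]
  simp [RCLike.ofReal_real_eq_id]

noncomputable def posPart : Matrix ι ι ℝ :=
  hA.eigenvectorUnitary.val * diagonal hA.eigenvalues⁺ * star hA.eigenvectorUnitary.val

noncomputable def negPart : Matrix ι ι ℝ :=
  hA.eigenvectorUnitary.val * diagonal hA.eigenvalues⁻ * star hA.eigenvectorUnitary.val

theorem posPart_sub_negPart : hA.posPart - hA.negPart = A := by
  rw [posPart, negPart, ← Matrix.sub_mul, ← Matrix.mul_sub, diagonal_sub, ← Pi.sub_def,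
    _root_.posPart_sub_negPart, ← hA.eq_unitary_conj_diagonal]

theorem posSemidef_posPart : hA.posPart.PosSemidef :=
  posSemidef_unitary_conj_diagonal _ (posPart_nonneg _)

theorem posSemidef_negPart : hA.negPart.PosSemidef :=
  posSemidef_unitary_conj_diagonal _ (negPart_nonneg _)

theorem transpose_posPart : hA.posPartᵀ = hA.posPart := by
  rw [posPart, transpose_unitary_conj, diagonal_transpose]

theorem posPart_mul_negPart : hA.posPart * hA.negPart = 0 := by
  have h : (fun i => hA.eigenvalues⁺ i * hA.eigenvalues⁻ i) = 0 := by
    ext i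
    rcases le_total 0 (hA.eigenvalues i) with hi | hi <;> simp [hi]
  rw [posPart, negPart, unitary_conj_mul_unitary_conj, diagonal_mul_diagonal', h]
  simp

end Matrix.IsHermitian

theorem Matrix.IsHermitian.schattenNorm_posPart_le {n : ℕ} {A : Matrix (Fin n) (Fin n) ℝ}
    (hA : A.IsHermitian) (p : ℝ≥0∞) : schattenNorm p hA.posPart ≤ schattenNorm p A := by
  conv_rhs => rw [hA.eq_unitary_conj_diagonal]
  rw [IsHermitian.posPart, schattenNorm_unitary_conj, schattenNorm_unitary_conj]
  refine schattenNorm_diagonal_le_of_abs_le p fun i => ?_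
  rw [Pi.posPart_apply, abs_of_nonneg (posPart_nonneg _), posPart_def]
  exact max_le (le_abs_self _) (abs_nonneg _)

theorem stmt16_general {n : ℕ} (p : ℝ≥0∞) (r : ℝ)
    (X : Matrix (Fin n) (Fin n) ℝ) (hX : X.PosSemidef)
    (M : Matrix (Fin n) (Fin n) ℝ) (hMsymm : M.IsSymm) (hMball : schattenNorm p M ≤ r)
    (hMproj : ∀ Y : Matrix (Fin n) (Fin n) ℝ, Y.IsSymm → schattenNorm p Y ≤ r →
      frobNorm (X - M) ≤ frobNorm (X - Y)) :
    M.PosSemidef ∧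
    ∀ Y : Matrix (Fin n) (Fin n) ℝ, Y.IsSymm → schattenNorm p Y ≤ r → Y.PosSemidef →
      frobNorm (X - M) ≤ frobNorm (X - Y) := by
  refine ⟨?_, fun Y hY hYr _ => hMproj Y hY hYr⟩
  have hM : M.IsHermitian := isHermitian_iff_isSymm.mpr hMsymm
  have hdecomp := hM.posPart_sub_negPart
  have hnegPart : hM.negPart = 0 := by
    refine eq_zero_of_frobNorm_sub_le hX hM.posSemidef_negPart
      (by rw [hM.transpose_posPart, hM.posPart_mul_negPart]) ?_
    rw [hdecomp]
    exact hMproj _ hM.transpose_posPart ((hM.schattenNorm_posPart_le p).trans hMball)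
  rw [← hdecomp, hnegPart, sub_zero]
  exact hM.posSemidef_posPart

/-- If `X ⪰ 0` and `M` is the Frobenius projection of `X` onto the
Schatten ball `S_r^p = {Y ∈ Sⁿ : ‖Y‖_p ≤ r}`, then `M ⪰ 0`; consequently `M` is also the
Frobenius projection of `X` onto `S_r^p ∩ S₊ⁿ` (it lies in that set and minimizes the
Frobenius distance to `X` over it). -/
theorem stmt16 {n : ℕ} (p : ℝ≥0∞) (hp : 1 ≤ p) (r : ℝ) (hr : 0 ≤ r)
    (X : Matrix (Fin n) (Fin n) ℝ) (hX : X.PosSemidef)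
    (M : Matrix (Fin n) (Fin n) ℝ) (hMsymm : M.IsSymm) (hMball : schattenNorm p M ≤ r)
    (hMproj : ∀ Y : Matrix (Fin n) (Fin n) ℝ, Y.IsSymm → schattenNorm p Y ≤ r →
      frobNorm (X - M) ≤ frobNorm (X - Y)) :
    M.PosSemidef ∧
    ∀ Y : Matrix (Fin n) (Fin n) ℝ, Y.IsSymm → schattenNorm p Y ≤ r → Y.PosSemidef →
      frobNorm (X - M) ≤ frobNorm (X - Y) :=
  stmt16_general p r X hX M hMsymm hMball hMproj
end
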